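/- arXiv:1010.3640 — 2 statements merged into one kernel-verified Lean document; each statement's English description precedes it below -/
import Mathlib

section
/- Let α be a word of length k, ℓ ∈ ℕ, and w a word with prefix α. If v·α is a prefix of some word of the form x₁⋯x_m·α with each x_i ∈ P_α(w,ℓ), then v is a concatenation of finitely many elements of P_α(w,ℓ), i.e., v ∈ P_α(w,ℓ)*. -/
/-! Peel the factors `x₁, x₂, …` off `x₁⋯x_m α` one at a time. While `v` is at least as long as
the current factor, that factor is a prefix of `v` and we recurse on the rest. Otherwise `vα` is a
prefix of `x α`, because `α` is a prefix of every `x α` with `x ∈ P_α(w,ℓ)` (as `α <+: w`), hence of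
the remaining product followed by `α`; and `P_α(w,ℓ)` is closed under this shortening. -/

open Computability

/-- Reverse-complement of a word under the involution `bar`. -/
def wbar {S : Type} (bar : S → S) (w : List S) : List S := (w.map bar).reverse

/-- The set of `α`-prefixes of `w` of length at most `ℓ`. -/
def Pa {S : Type} (α w : List S) (ℓ : ℕ) : Language S :=
  {v | v ++ α <+: w ∧ v.length ≤ ℓ}

/-- `α Σ* ᾱ` : words with prefix `α` and suffix `ᾱ`. -/
def Dom {S : Type} (bar : S → S) (α : List S) : Language S :=
  {z | ∃ β, z = α ++ β ++ wbar bar α}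

/-- One-step parameterized hairpin completion with binding word `α`,
left bound `ℓ`, right bound `r`. -/
def HaP {S : Type} (bar : S → S) (α : List S) (ℓ r : ℕ) (L : Language S) : Language S :=
  {z | ∃ γ β, γ.length ≤ ℓ ∧ z = γ ++ α ++ β ++ wbar bar α ++ wbar bar γ ∧
      α ++ β ++ wbar bar α ++ wbar bar γ ∈ L} ⊔
  {z | ∃ γ β, γ.length ≤ r ∧ z = γ ++ α ++ β ++ wbar bar α ++ wbar bar γ ∧
      γ ++ α ++ β ++ wbar bar α ∈ L}

/-- One-step parameterized hairpin completion `H_k(L,ℓ,r)`. -/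
def HkP {S : Type} (bar : S → S) (k ℓ r : ℕ) (L : Language S) : Language S :=
  {z | ∃ α : List S, α.length = k ∧ z ∈ HaP bar α ℓ r L}

def HaIter {S : Type} (bar : S → S) (α : List S) (ℓ r : ℕ) (L : Language S) : ℕ → Language S
  | 0 => L
  | n + 1 => HaP bar α ℓ r (HaIter bar α ℓ r L n)

/-- Iterated parameterized hairpin completion `H_α*(L,ℓ,r)`. -/
def HaStar {S : Type} (bar : S → S) (α : List S) (ℓ r : ℕ) (L : Language S) : Language S :=
  {z | ∃ n, z ∈ HaIter bar α ℓ r L n}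

def HkIter {S : Type} (bar : S → S) (k ℓ r : ℕ) (L : Language S) : ℕ → Language S
  | 0 => L
  | n + 1 => HkP bar k ℓ r (HkIter bar k ℓ r L n)

/-- Iterated parameterized hairpin completion `H_k*(L,ℓ,r)`. -/
def HkStar {S : Type} (bar : S → S) (k ℓ r : ℕ) (L : Language S) : Language S :=
  {z | ∃ n, z ∈ HkIter bar k ℓ r L n}

/-- Unbounded two-sided hairpin completion `H_k(L)`. -/
def HU {S : Type} (bar : S → S) (k : ℕ) (L : Language S) : Language S :=
  {z | ∃ γ α β, α.length = k ∧ z = γ ++ α ++ β ++ wbar bar α ++ wbar bar γ ∧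
      (α ++ β ++ wbar bar α ++ wbar bar γ ∈ L ∨ γ ++ α ++ β ++ wbar bar α ∈ L)}

/-- Unbounded right-sided hairpin completion `RH_k(L)`. -/
def RHU {S : Type} (bar : S → S) (k : ℕ) (L : Language S) : Language S :=
  {z | ∃ γ α β, α.length = k ∧ z = γ ++ α ++ β ++ wbar bar α ++ wbar bar γ ∧
      γ ++ α ++ β ++ wbar bar α ∈ L}

def HUIter {S : Type} (bar : S → S) (k : ℕ) (L : Language S) : ℕ → Language S
  | 0 => L
  | n + 1 => HU bar k (HUIter bar k L n)

/-- Iterated unbounded two-sided hairpin completion `H_k*(L)`. -/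
def HUStar {S : Type} (bar : S → S) (k : ℕ) (L : Language S) : Language S :=
  {z | ∃ n, z ∈ HUIter bar k L n}

def RHUIter {S : Type} (bar : S → S) (k : ℕ) (L : Language S) : ℕ → Language S
  | 0 => L
  | n + 1 => RHU bar k (RHUIter bar k L n)

/-- Iterated unbounded right-sided hairpin completion `RH_k*(L)`. -/
def RHUStar {S : Type} (bar : S → S) (k : ℕ) (L : Language S) : Language S :=
  {z | ∃ n, z ∈ RHUIter bar k L n}

/-- Image of a language under reverse-complement. -/
def barSet {S : Type} (bar : S → S) (A : Language S) : Language S := wbar bar '' A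

namespace List

variable {S : Type} {α : List S}

theorem prefix_flatten_append {xs : List (List S)} (h : ∀ x ∈ xs, α <+: x ++ α) :
    α <+: xs.flatten ++ α := by
  induction xs with
  | nil => simp
  | cons x xs ih =>
    have hrest : x ++ α <+: x ++ (xs.flatten ++ α) :=
      (prefix_append_right_inj x).mpr (ih fun y hy => h y (mem_cons_of_mem x hy))
    simpa using (h x mem_cons_self).trans hrest

end List

namespace Language

open List

variable {S : Type} {α : List S} {L : Language S}

theorem mem_kstar_of_prefix_flatten_append (hα : ∀ x ∈ L, α <+: x ++ α)
    (hshorten : ∀ x ∈ L, ∀ v, v ++ α <+: x ++ α → v ∈ L) {xs : List (List S)}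
    (hxs : ∀ x ∈ xs, x ∈ L) {v : List S} (hv : v ++ α <+: xs.flatten ++ α) : v ∈ L∗ := by
  induction xs generalizing v with
  | nil =>
    have hv_nil : v = [] := by simpa using hv.length_le
    exact hv_nil ▸ nil_mem_kstar L
  | cons x xs ih =>
    have hx : x ∈ L := hxs x mem_cons_self
    have hxs' : ∀ y ∈ xs, y ∈ L := fun y hy => hxs y (mem_cons_of_mem x hy)
    rw [flatten_cons, append_assoc] at hv
    by_cases hlen : x.length ≤ v.length
    · have hxv : x <+: v :=
        prefix_of_prefix_length_le (prefix_append x _) ((prefix_append v α).trans hv) hlen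
      obtain ⟨v', rfl⟩ := hxv
      rw [append_assoc, prefix_append_right_inj] at hv
      exact mul_kstar_le_kstar (a := L) (append_mem_mul hx (ih hxs' hv))
    · have hxα : x ++ α <+: x ++ (xs.flatten ++ α) :=
        (prefix_append_right_inj x).mpr (prefix_flatten_append fun y hy => hα y (hxs' y hy))
      have hvx : v ++ α <+: x ++ α :=
        prefix_of_prefix_length_le hv hxα (by simp only [length_append]; omega)
      exact le_kstar (a := L) (hshorten x hx v hvx)

end Language

theorem prefix_append_of_mem_Pa {S : Type} {α w x : List S} {ℓ : ℕ} (hw : α <+: w)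
    (hx : x ∈ Pa α w ℓ) : α <+: x ++ α :=
  List.prefix_of_prefix_length_le hw hx.1 (by simp)

theorem mem_Pa_of_append_prefix {S : Type} {α w x v : List S} {ℓ : ℕ} (hx : x ∈ Pa α w ℓ)
    (hv : v ++ α <+: x ++ α) : v ∈ Pa α w ℓ := by
  have hlen : v.length ≤ x.length := by simpa using hv.length_le
  exact ⟨hv.trans hx.1, hlen.trans hx.2⟩

theorem mem_kstar_of_prefix_general {S : Type} (ℓ : ℕ) (α w v : List S)
    (hw : α <+: w)
    (h : ∃ xs : List (List S), (∀ x ∈ xs, x ∈ Pa α w ℓ) ∧ v ++ α <+: xs.flatten ++ α) :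
    v ∈ (Pa α w ℓ)∗ := by
  obtain ⟨xs, hxs, hv⟩ := h
  exact Language.mem_kstar_of_prefix_flatten_append (fun _ => prefix_append_of_mem_Pa hw)
    (fun _ hx _ => mem_Pa_of_append_prefix hx) hxs hv

/-- If `vα` is a prefix of a word in `P_α(w,ℓ)* · α`, then `v ∈ P_α(w,ℓ)*`. -/
theorem mem_kstar_of_prefix {S : Type} (k ℓ : ℕ) (α w v : List S)
    (hα : α.length = k) (hw : α <+: w)
    (h : ∃ xs : List (List S), (∀ x ∈ xs, x ∈ Pa α w ℓ) ∧ v ++ α <+: xs.flatten ++ α) :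
    v ∈ (Pa α w ℓ)∗ :=
  mem_kstar_of_prefix_general ℓ α w v hw h
end

section
/- For a language L over an involution-closed alphabet Σ and k, ℓ, r ∈ ℕ, the iterated parameterized hairpin completion satisfies H_k*(L,ℓ,r) = L ∪ ⋃_{α ∈ Σ^k} H_α*(L_α, ℓ, r), where L_α = H_k(L,ℓ,r) ∩ α·Σ*·ᾱ. -/
open Computability

/-! Every word of `H_k(L,ℓ,r)` has the shape `u β ū` with `|u| ≥ k`, so it lies in
`L_δ` for its own length-`k` prefix `δ`. Once a word lies in `α Σ* ᾱ`, every further completion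
with a binding word of length `k` must bind exactly at `α` and stays in `α Σ* ᾱ`. Hence an
iteration of `H_k` either stops at `L` or is, after its first step, an iteration of a single
`H_α` started in `L_α`. -/

section Hairpin

variable {S : Type} {bar : S → S}

lemma wbar_append (u v : List S) : wbar bar (u ++ v) = wbar bar v ++ wbar bar u := by
  simp [wbar]

lemma wbar_suffix_wbar_iff (hbar : ∀ a, bar (bar a) = a) {u v : List S} :
    wbar bar u <:+ wbar bar v ↔ u <+: v := by
  refine ⟨fun h => ?_, fun h => List.reverse_suffix.mpr (h.map bar)⟩
  simpa [Function.comp_def, hbar] using (List.reverse_suffix.mp h).map bar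

lemma hairpin_eq (γ α β : List S) :
    γ ++ α ++ β ++ wbar bar α ++ wbar bar γ = (γ ++ α) ++ β ++ wbar bar (γ ++ α) := by
  simp [wbar_append]

lemma prefix_of_mem_Dom {α w : List S} (hw : w ∈ Dom bar α) : α <+: w := by
  obtain ⟨β, rfl⟩ := hw
  simp only [List.append_assoc, List.prefix_append]

lemma wbar_suffix_of_mem_Dom {α w : List S} (hw : w ∈ Dom bar α) : wbar bar α <:+ w := by
  obtain ⟨β, rfl⟩ := hw
  exact List.suffix_append _ _

lemma mem_Dom_of_prefix {δ u : List S} (h : δ <+: u) (β : List S) :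
    u ++ β ++ wbar bar u ∈ Dom bar δ := by
  obtain ⟨t, rfl⟩ := h
  exact ⟨t ++ β ++ wbar bar t, by simp [wbar_append]⟩

lemma HaP_mono {α : List S} {ℓ r : ℕ} {M N : Language S} (h : M ≤ N) :
    HaP bar α ℓ r M ≤ HaP bar α ℓ r N := by
  rintro z (⟨γ, β, hγ, hz, hw⟩ | ⟨γ, β, hγ, hz, hw⟩)
  exacts [Or.inl ⟨γ, β, hγ, hz, h hw⟩, Or.inr ⟨γ, β, hγ, hz, h hw⟩]

lemma exists_mem_of_mem_HaP {α : List S} {ℓ r : ℕ} {M : Language S} {z : List S}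
    (hz : z ∈ HaP bar α ℓ r M) : ∃ w ∈ M, z ∈ HaP bar α ℓ r {w} := by
  rcases hz with ⟨γ, β, hγ, hz, hw⟩ | ⟨γ, β, hγ, hz, hw⟩
  exacts [⟨_, hw, Or.inl ⟨γ, β, hγ, hz, rfl⟩⟩, ⟨_, hw, Or.inr ⟨γ, β, hγ, hz, rfl⟩⟩]

lemma HaP_le_HkP {α : List S} {ℓ r : ℕ} (M : Language S) :
    HaP bar α ℓ r M ≤ HkP bar α.length ℓ r M :=
  fun _ hz => ⟨α, rfl, hz⟩

lemma exists_mem_Dom_of_mem_HaP {α : List S} {ℓ r : ℕ} {M : Language S} {z : List S}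
    (hz : z ∈ HaP bar α ℓ r M) : ∃ δ : List S, δ.length = α.length ∧ z ∈ Dom bar δ := by
  obtain ⟨γ, β, -, rfl, -⟩ | ⟨γ, β, -, rfl, -⟩ := hz <;>
  · refine ⟨(γ ++ α).take α.length, by simp, ?_⟩
    rw [hairpin_eq]
    exact mem_Dom_of_prefix (List.take_prefix _ _) β

lemma HaP_le_Dom (hbar : ∀ a, bar (bar a) = a) {α : List S} {ℓ r : ℕ} {M : Language S}
    (hM : M ≤ Dom bar α) : HaP bar α ℓ r M ≤ Dom bar α := by
  rintro z (⟨γ, β, -, rfl, hw⟩ | ⟨γ, β, -, rfl, hw⟩) <;> rw [hairpin_eq] <;>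
    refine mem_Dom_of_prefix ?_ β
  · rw [← wbar_suffix_wbar_iff hbar]
    refine List.suffix_of_suffix_length_le (wbar_suffix_of_mem_Dom (hM hw)) ?_ (by simp [wbar])
    exact ⟨α ++ β, by simp [wbar_append]⟩
  · exact List.prefix_of_prefix_length_le (prefix_of_mem_Dom (hM hw))
      ⟨β ++ wbar bar α, by simp⟩ (by simp)

lemma HaP_le_HaP_of_le_Dom (hbar : ∀ a, bar (bar a) = a) {α α' : List S}
    (hlen : α'.length = α.length) {ℓ r : ℕ} {M : Language S} (hM : M ≤ Dom bar α) :
    HaP bar α' ℓ r M ≤ HaP bar α ℓ r M := by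
  rintro z (⟨γ, β, hγ, hz, hw⟩ | ⟨γ, β, hγ, hz, hw⟩)
  · have : α' = α := (List.prefix_of_prefix_length_le ⟨β ++ wbar bar α' ++ wbar bar γ, by simp⟩
      (prefix_of_mem_Dom (hM hw)) hlen.le).eq_of_length hlen
    subst this
    exact Or.inl ⟨γ, β, hγ, hz, hw⟩
  · have hsuffix : wbar bar α' <:+ wbar bar α :=
      List.suffix_of_suffix_length_le (List.suffix_append _ _) (wbar_suffix_of_mem_Dom (hM hw))
        (by simp [wbar, hlen])
    have : α' = α := ((wbar_suffix_wbar_iff hbar).mp hsuffix).eq_of_length hlen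
    subst this
    exact Or.inr ⟨γ, β, hγ, hz, hw⟩

lemma HaIter_le_Dom (hbar : ∀ a, bar (bar a) = a) {α : List S} {ℓ r : ℕ} {M : Language S}
    (hM : M ≤ Dom bar α) (n : ℕ) : HaIter bar α ℓ r M n ≤ Dom bar α := by
  induction n with
  | zero => exact hM
  | succ n ih => exact HaP_le_Dom hbar ih

lemma HaIter_le_HkIter_succ {α : List S} {ℓ r : ℕ} (L : Language S) (n : ℕ) :
    HaIter bar α ℓ r (HkP bar α.length ℓ r L ⊓ Dom bar α) n ≤
      HkIter bar α.length ℓ r L (n + 1) := by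
  induction n with
  | zero => exact inf_le_left
  | succ n ih => exact (HaP_mono ih).trans (HaP_le_HkP _)

end Hairpin

/-- `H_k*(L,ℓ,r) = L ∪ ⋃_{α ∈ Σ^k} H_α*(L_α,ℓ,r)` where
`L_α = H_k(L,ℓ,r) ∩ α·Σ*·ᾱ`. -/
theorem HkStar_eq_union_HaStar {S : Type} (bar : S → S)
    (hbar : ∀ a, bar (bar a) = a) (k ℓ r : ℕ) (L : Language S) :
    HkStar bar k ℓ r L =
      L ⊔ {z | ∃ α : List S, α.length = k ∧
        z ∈ HaStar bar α ℓ r (HkP bar k ℓ r L ⊓ Dom bar α)} := by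
  apply le_antisymm
  · rintro z ⟨n, hn⟩
    induction n generalizing z with
    | zero => exact Or.inl hn
    | succ n ih =>
      obtain ⟨α', rfl, hz⟩ := hn
      obtain ⟨w, hw, hzw⟩ := exists_mem_of_mem_HaP hz
      rcases ih hw with hwL | ⟨α, hα, m, hm⟩
      · obtain ⟨δ, hδ, hzδ⟩ := exists_mem_Dom_of_mem_HaP hzw
        have hzHkP : z ∈ HkP bar α'.length ℓ r L :=
          HaP_le_HkP _ (HaP_mono (Set.singleton_subset_iff.mpr hwL) hzw)
        exact Or.inr ⟨δ, hδ, 0, hzHkP, hzδ⟩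
      · have hwα : {w} ≤ Dom bar α :=
          Set.singleton_subset_iff.mpr (HaIter_le_Dom hbar inf_le_right m hm)
        have hzα : z ∈ HaP bar α ℓ r {w} := HaP_le_HaP_of_le_Dom hbar hα.symm hwα hzw
        exact Or.inr ⟨α, hα, m + 1, HaP_mono (Set.singleton_subset_iff.mpr hm) hzα⟩
  · rintro z (hz | ⟨α, rfl, n, hn⟩)
    exacts [⟨0, hz⟩, ⟨n + 1, HaIter_le_HkIter_succ L n hn⟩]
end
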